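/- arXiv:0712.3175 — 2 statements merged into one kernel-verified Lean document; each statement's English description precedes it below -/
import Mathlib

section
/- Let x ∈ G have finite order n and let y ∈ G with y⁻¹xy ∉ ⟨x⟩. Then the bicyclic unit u = 1 + (1 - x)y·x̂ (where x̂ = 1 + x + ... + x^{n-1}) is a nontrivial unit of ZG, i.e., u ≠ 1, and u is a unit with inverse 1 - (1 - x)y·x̂. -/
/-- The canonical involution on the group ring `K[G]`, sending `∑ a_g g` to `∑ a_g g⁻¹`. -/
noncomputable def gstar {K G : Type*} [CommRing K] [Group G] (x : MonoidAlgebra K G) :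
    MonoidAlgebra K G := MonoidAlgebra.mapDomain (fun g => g⁻¹) x

/-- `x̂ = 1 + x + ⋯ + x^(n-1)` in the integral group ring, where `n = orderOf x`. -/
noncomputable def hatZ {G : Type*} [Group G] (x : G) : MonoidAlgebra ℤ G :=
  ∑ i ∈ Finset.range (orderOf x), (MonoidAlgebra.of ℤ G x) ^ i

/-!
Since `x̂ (1 - x) = x^n - 1 = 0`, the element `a = (1 - x) y x̂` squares to zero, so `1 + a` and
`1 - a` are mutually inverse. In `ℤG`, `x̂` is the indicator of `⟨x⟩`, so `y x̂` and `x y x̂` are the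
indicators of the cosets `y⟨x⟩` and `xy⟨x⟩`; these differ at `y` because `y⁻¹xy ∉ ⟨x⟩`, so `a ≠ 0`.
-/

open MonoidAlgebra

theorem hatZ_mul_one_sub_of {G : Type*} [Group G] (x : G) :
    hatZ x * (1 - of ℤ G x) = 0 := by
  rw [← neg_sub, mul_neg, hatZ, geom_sum_mul, ← map_pow, pow_orderOf_eq_one, map_one, sub_self,
    neg_zero]

open Classical in
theorem coeff_hatZ {G : Type*} [Group G] {x : G} (hx : IsOfFinOrder x) (g : G) :
    (hatZ x).coeff g = if g ∈ Subgroup.zpowers x then 1 else 0 := by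
  have hsum : hatZ x = ∑ h ∈ (Finset.range (orderOf x)).image (x ^ ·), single h 1 := by
    rw [hatZ, Finset.sum_image fun i hi j hj hij => pow_injOn_Iio_orderOf
      (by simpa using hi) (by simpa using hj) hij]
    simp only [← map_pow]
    rfl
  rw [hsum, coeff_sum, Finsupp.finsetSum_apply]
  simp_rw [coeff_single, Finsupp.single_apply]
  rw [Finset.sum_ite_eq']
  exact if_congr hx.mem_zpowers_iff_mem_range_orderOf.symm rfl rfl

open Classical in
theorem coeff_of_mul_hatZ {G : Type*} [Group G] {x : G} (hx : IsOfFinOrder x) (y g : G) :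
    (of ℤ G y * hatZ x).coeff g = if y⁻¹ * g ∈ Subgroup.zpowers x then 1 else 0 := by
  rw [of_apply, coeff_single_mul_apply, one_mul, coeff_hatZ hx]

theorem coeff_one_sub_of_mul_of_mul_hatZ_self {G : Type*} [Group G] {x y : G}
    (hx : IsOfFinOrder x) (hxy : y⁻¹ * x * y ∉ Subgroup.zpowers x) :
    ((1 - of ℤ G x) * of ℤ G y * hatZ x).coeff y = 1 := by
  have hconj : (x * y)⁻¹ * y ∉ Subgroup.zpowers x := fun h => hxy <| by
    simpa [mul_assoc] using inv_mem h
  rw [sub_mul, one_mul, ← map_mul, sub_mul, coeff_sub, Finsupp.sub_apply, coeff_of_mul_hatZ hx,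
    coeff_of_mul_hatZ hx, inv_mul_cancel, if_pos (one_mem _), if_neg hconj, sub_zero]

section SquareZero

variable {R : Type*} [Ring R]

theorem mul_self_eq_zero_of_right_mul_left_eq_zero {a b c : R} (h : c * a = 0) :
    a * b * c * (a * b * c) = 0 := by
  simp only [mul_assoc, ← mul_assoc c, h, zero_mul, mul_zero]

theorem one_add_mul_one_sub_of_mul_self_eq_zero {a : R} (ha : a * a = 0) :
    (1 + a) * (1 - a) = 1 := by
  rw [← (Commute.one_left a).mul_self_sub_mul_self_eq, ha, mul_one, sub_zero]

theorem one_sub_mul_one_add_of_mul_self_eq_zero {a : R} (ha : a * a = 0) :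
    (1 - a) * (1 + a) = 1 := by
  rw [← (Commute.one_left a).mul_self_sub_mul_self_eq', ha, mul_one, sub_zero]

end SquareZero

/-- A nontrivial bicyclic unit: if y⁻¹xy ∉ ⟨x⟩ (x of finite order) then
u = 1 + (1-x)·y·x̂ ≠ 1 and u is a unit with inverse 1 - (1-x)·y·x̂. -/
theorem stmt_7 {G : Type*} [Group G] (x y : G) (hx : IsOfFinOrder x)
    (hxy : y⁻¹ * x * y ∉ Subgroup.zpowers x) :
    (1 + (1 - MonoidAlgebra.of ℤ G x) * MonoidAlgebra.of ℤ G y * hatZ x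
        ≠ (1 : MonoidAlgebra ℤ G)) ∧
    (1 + (1 - MonoidAlgebra.of ℤ G x) * MonoidAlgebra.of ℤ G y * hatZ x) *
      (1 - (1 - MonoidAlgebra.of ℤ G x) * MonoidAlgebra.of ℤ G y * hatZ x) = 1 ∧
    (1 - (1 - MonoidAlgebra.of ℤ G x) * MonoidAlgebra.of ℤ G y * hatZ x) *
      (1 + (1 - MonoidAlgebra.of ℤ G x) * MonoidAlgebra.of ℤ G y * hatZ x) = 1 := by
  set a := (1 - of ℤ G x) * of ℤ G y * hatZ x
  have ha_sq : a * a = 0 := mul_self_eq_zero_of_right_mul_left_eq_zero (hatZ_mul_one_sub_of x)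
  have ha_coeff : a.coeff y = 1 := coeff_one_sub_of_mul_of_mul_hatZ_self hx hxy
  have ha_ne : a ≠ 0 := fun h => by simp [h] at ha_coeff
  exact ⟨by rwa [Ne, add_eq_left], one_add_mul_one_sub_of_mul_self_eq_zero ha_sq,
    one_sub_mul_one_add_of_mul_self_eq_zero ha_sq⟩
end

section
/- Suppose u ∈ ZG is a symmetric unit (u* = u) and u = b·w with b ∈ G of infinite order and w ∈ Z[t(G)] with support contained in the torsion subgroup t(G). Then a contradiction follows; i.e., no symmetric unit has such a form with b of infinite order. Concretely: if b·w is symmetric with w supported on torsion elements, then there exist g in the support of w with (bg)² of finite order, contradicting that b is of infinite order provided t(G) is a normal subgroup. -/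
section GroupRing

variable {K G : Type*} [CommRing K] [Group G]

theorem gstar_coeff_inv (x : MonoidAlgebra K G) (g : G) : (gstar x).coeff g⁻¹ = x.coeff g :=
  Finsupp.mapDomain_apply inv_injective x.coeff g

theorem coeff_inv_of_gstar_eq {x : MonoidAlgebra K G} (hx : gstar x = x) (g : G) :
    x.coeff g⁻¹ = x.coeff g := by
  simpa only [hx] using gstar_coeff_inv x g

theorem coeff_of_mul_apply (b : G) (w : MonoidAlgebra K G) (x : G) :
    (MonoidAlgebra.of K G b * w).coeff x = w.coeff (b⁻¹ * x) := by
  rw [MonoidAlgebra.of_apply, MonoidAlgebra.coeff_single_mul_apply, one_mul]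

theorem coeff_inv_mul_inv_mul_inv_of_gstar_of_mul_eq {b : G} {w : MonoidAlgebra K G}
    (hsym : gstar (MonoidAlgebra.of K G b * w) = MonoidAlgebra.of K G b * w) (g : G) :
    w.coeff (b⁻¹ * g⁻¹ * b⁻¹) = w.coeff g := by
  have h := coeff_inv_of_gstar_eq hsym (b * g)
  rwa [coeff_of_mul_apply, coeff_of_mul_apply, mul_inv_rev, inv_mul_cancel_left,
    ← mul_assoc] at h

end GroupRing

theorem Subgroup.sq_mem_of_inv_mul_inv_mul_inv_mem {G : Type*} [Group G] {T : Subgroup G}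
    [T.Normal] {b g : G} (hg : g ∈ T) (h : b⁻¹ * g⁻¹ * b⁻¹ ∈ T) : b ^ 2 ∈ T := by
  have hconj : b * g⁻¹ * b⁻¹ ∈ T := ‹T.Normal›.conj_mem g⁻¹ (inv_mem hg) b
  have heq : b ^ 2 = (b * g⁻¹ * b⁻¹) * (b⁻¹ * g⁻¹ * b⁻¹)⁻¹ := by
    rw [pow_two]; group
  rw [heq]
  exact mul_mem hconj (inv_mem h)

/-- No symmetric unit of ℤG has the form b·w with b ∈ G of infinite order and w supported
on the torsion subgroup t(G) (assumed to be a normal subgroup). -/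
theorem stmt_16 {G : Type*} [Group G] (T : Subgroup G) [T.Normal]
    (hT : ∀ g : G, g ∈ T ↔ IsOfFinOrder g)
    (b : G) (hb : ¬ IsOfFinOrder b) (w : MonoidAlgebra ℤ G)
    (hw : ∀ g ∈ w.coeff.support, g ∈ T)
    (hunit : IsUnit (MonoidAlgebra.of ℤ G b * w))
    (hsym : gstar (MonoidAlgebra.of ℤ G b * w) = MonoidAlgebra.of ℤ G b * w) :
    False := by
  have hw0 : w ≠ 0 := right_ne_zero_of_mul hunit.ne_zero
  obtain ⟨g, hg⟩ : w.coeff.support.Nonempty :=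
    Finsupp.support_nonempty_iff.mpr (MonoidAlgebra.coeff_eq_zero.not.mpr hw0)
  have hg' : b⁻¹ * g⁻¹ * b⁻¹ ∈ w.coeff.support := by
    rwa [Finsupp.mem_support_iff, coeff_inv_mul_inv_mul_inv_of_gstar_of_mul_eq hsym,
      ← Finsupp.mem_support_iff]
  have hb2 : b ^ 2 ∈ T := Subgroup.sq_mem_of_inv_mul_inv_mul_inv_mem (hw g hg) (hw _ hg')
  exact hb (((hT _).mp hb2).of_pow two_ne_zero)
end
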